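/- arXiv:2205.12377 — 7 statements merged into one kernel-verified Lean document; each statement's English description precedes it below -/
import Mathlib

section
/- Let a, b, c, d be unit vectors in Euclidean space ℝ³ and let t be a real number with 0 ≤ t ≤ 1/5. If |⟨a,b⟩| ≤ t, |⟨b,c⟩| ≤ t, |⟨c,a⟩| ≤ t, |⟨b,d⟩| ≤ t and |⟨c,d⟩| ≤ t, then |⟨a,d⟩| ≥ 1 − 5t². -/
open scoped RealInnerProductSpace

/-!
Four vectors in `ℝ³` are linearly dependent, so their Gram matrix `G` is singular. With
`r = ⟪b, c⟫`, the Desnanot–Jacobi identity expresses `(1 - r²) det G` as the product of the Gram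
determinants of `(a, b, c)` and `(b, c, d)` minus the square of a cofactor, which is
`⟪a, d⟫ (1 - r²)` up to an error of size at most `2t² + 2t³`. Both `3 × 3` Gram determinants are
at least `1 - r² - 2t² - 2t³`, so `det G = 0` gives `|⟪a, d⟫| (1 - r²) ≥ 1 - r² - 4t² - 4t³`,
and this is at least `(1 - 5t²)(1 - r²)` because `t ≤ 1/5`.
-/

theorem Matrix.det_gram_eq_zero_of_finrank_lt {𝕜 E n : Type*} [RCLike 𝕜]
    [SeminormedAddCommGroup E] [InnerProductSpace 𝕜 E] [FiniteDimensional 𝕜 E]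
    [Fintype n] [DecidableEq n] {v : n → E} (h : Module.finrank 𝕜 E < Fintype.card n) :
    (gram 𝕜 v).det = 0 :=
  by_contra fun h0 => h.not_ge (linearIndependent_of_det_gram_ne_zero h0).fintype_card_le_finrank

theorem Matrix.gram_four_of_norm_eq_one {E : Type*} [NormedAddCommGroup E] [InnerProductSpace ℝ E]
    {a b c d : E} (ha : ‖a‖ = 1) (hb : ‖b‖ = 1) (hc : ‖c‖ = 1) (hd : ‖d‖ = 1) :
    Matrix.gram ℝ ![a, b, c, d] =
      !![1, ⟪a, b⟫, ⟪a, c⟫, ⟪a, d⟫; ⟪a, b⟫, 1, ⟪b, c⟫, ⟪b, d⟫;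
        ⟪a, c⟫, ⟪b, c⟫, 1, ⟪c, d⟫; ⟪a, d⟫, ⟪b, d⟫, ⟪c, d⟫, 1] := by
  ext i j
  fin_cases i <;> fin_cases j <;>
    simp [Matrix.gram_apply, ha, hb, hc, hd, real_inner_comm]

/-- The determinant of `!![1, p, q; p, 1, r; q, r, 1]`. -/
def unitGramDet (p q r : ℝ) : ℝ := 1 - p ^ 2 - q ^ 2 - r ^ 2 + 2 * p * q * r

theorem one_sub_sq_mul_det_unitDiag_four (p q r s u x : ℝ) :
    (1 - r ^ 2) * !![1, p, q, x; p, 1, r, s; q, r, 1, u; x, s, u, 1].det =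
      unitGramDet p q r * unitGramDet s u r -
        (x * (1 - r ^ 2) - (q * u + p * s - r * (q * s + p * u))) ^ 2 := by
  simp [unitGramDet, Matrix.det_succ_row_zero, Fin.sum_univ_succ, Fin.succAbove]
  ring

theorem sub_le_unitGramDet {p q r t : ℝ} (hp : |p| ≤ t) (hq : |q| ≤ t) (hr : |r| ≤ t) :
    1 - r ^ 2 - 2 * t ^ 2 - 2 * t ^ 3 ≤ unitGramDet p q r := by
  have ht : 0 ≤ t := (abs_nonneg p).trans hp
  have hpqr : |p * q * r| ≤ t ^ 3 :=
    calc |p * q * r| = |p| * |q| * |r| := by rw [abs_mul, abs_mul]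
      _ ≤ t * t * t := by gcongr
      _ = t ^ 3 := by ring
  unfold unitGramDet
  nlinarith [sq_le_sq' (abs_le.1 hp).1 (abs_le.1 hp).2, sq_le_sq' (abs_le.1 hq).1 (abs_le.1 hq).2,
    (abs_le.1 hpqr).1]

theorem abs_cofactor_le {p q r s u t : ℝ} (hp : |p| ≤ t) (hq : |q| ≤ t) (hr : |r| ≤ t)
    (hs : |s| ≤ t) (hu : |u| ≤ t) :
    |q * u + p * s - r * (q * s + p * u)| ≤ 2 * t ^ 2 + 2 * t ^ 3 := by
  have ht : 0 ≤ t := (abs_nonneg p).trans hp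
  have h2 {y z w e : ℝ} (hy : |y| ≤ t) (hz : |z| ≤ t) (hw : |w| ≤ t) (he : |e| ≤ t) :
      |y * z + w * e| ≤ 2 * t ^ 2 :=
    calc |y * z + w * e| ≤ |y| * |z| + |w| * |e| :=
          (abs_add_le _ _).trans_eq (by rw [abs_mul, abs_mul])
      _ ≤ t * t + t * t := by gcongr
      _ = 2 * t ^ 2 := by ring
  calc |q * u + p * s - r * (q * s + p * u)| ≤ |q * u + p * s| + |r| * |q * s + p * u| :=
        (abs_sub _ _).trans_eq (by rw [abs_mul])
    _ ≤ 2 * t ^ 2 + t * (2 * t ^ 2) := by gcongr; exacts [h2 hq hu hp hs, h2 hq hs hp hu]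
    _ = 2 * t ^ 2 + 2 * t ^ 3 := by ring

theorem one_sub_five_mul_sq_le_abs_of_det_eq_zero {p q r s u x t : ℝ} (ht : t ≤ 1 / 5)
    (hp : |p| ≤ t) (hq : |q| ≤ t) (hr : |r| ≤ t) (hs : |s| ≤ t) (hu : |u| ≤ t)
    (hdet : !![1, p, q, x; p, 1, r, s; q, r, 1, u; x, s, u, 1].det = 0) :
    1 - 5 * t ^ 2 ≤ |x| := by
  have ht0 : 0 ≤ t := (abs_nonneg p).trans hp
  have hr2 : r ^ 2 ≤ t ^ 2 := sq_le_sq' (abs_le.1 hr).1 (abs_le.1 hr).2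
  have hr1 : 0 < 1 - r ^ 2 := by nlinarith
  set A := 1 - r ^ 2 - 2 * t ^ 2 - 2 * t ^ 3
  set B := q * u + p * s - r * (q * s + p * u)
  have hA : 0 ≤ A := by nlinarith
  have hAB : A ≤ |x * (1 - r ^ 2) - B| := by
    have hP := sub_le_unitGramDet hp hq hr
    have hQ := sub_le_unitGramDet hs hu hr
    have hsq : (x * (1 - r ^ 2) - B) ^ 2 = unitGramDet p q r * unitGramDet s u r := by
      linear_combination one_sub_sq_mul_det_unitDiag_four p q r s u x - (1 - r ^ 2) * hdet
    rw [← abs_of_nonneg hA, ← sq_le_sq, hsq, sq]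
    exact mul_le_mul hP hQ hA (hA.trans hP)
  have hx : A - (2 * t ^ 2 + 2 * t ^ 3) ≤ |x| * (1 - r ^ 2) :=
    calc A - (2 * t ^ 2 + 2 * t ^ 3) ≤ |x * (1 - r ^ 2) - B| - |B| :=
          sub_le_sub hAB (abs_cofactor_le hp hq hr hs hu)
      _ ≤ |x * (1 - r ^ 2)| := by linarith [abs_sub (x * (1 - r ^ 2)) B]
      _ = |x| * (1 - r ^ 2) := by rw [abs_mul, abs_of_pos hr1]
  refine le_of_mul_le_mul_right ?_ hr1
  -- `1 - 4t - 5r² = (1 - 5t)(1 + t) + 5(t² - r²)`, which is where `t ≤ 1/5` enters.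
  have h5t : 0 ≤ (1 - 5 * t) * (1 + t) := mul_nonneg (by linarith) (by linarith)
  nlinarith [mul_nonneg (sq_nonneg t) h5t, mul_nonneg (sq_nonneg t) (sub_nonneg.2 hr2)]

theorem stmt_0_general (a b c d : EuclideanSpace ℝ (Fin 3)) (t : ℝ)
    (ha : ‖a‖ = 1) (hb : ‖b‖ = 1) (hc : ‖c‖ = 1) (hd : ‖d‖ = 1)
    (ht1 : t ≤ 1 / 5)
    (hab : |⟪a, b⟫| ≤ t) (hbc : |⟪b, c⟫| ≤ t) (hca : |⟪c, a⟫| ≤ t)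
    (hbd : |⟪b, d⟫| ≤ t) (hcd : |⟪c, d⟫| ≤ t) :
    1 - 5 * t ^ 2 ≤ |⟪a, d⟫| := by
  have hdet : (Matrix.gram ℝ ![a, b, c, d]).det = 0 :=
    Matrix.det_gram_eq_zero_of_finrank_lt (by simp)
  rw [Matrix.gram_four_of_norm_eq_one ha hb hc hd] at hdet
  rw [real_inner_comm] at hca
  exact one_sub_five_mul_sq_le_abs_of_det_eq_zero ht1 hab hca hbc hbd hcd hdet

theorem stmt_0 (a b c d : EuclideanSpace ℝ (Fin 3)) (t : ℝ)
    (ha : ‖a‖ = 1) (hb : ‖b‖ = 1) (hc : ‖c‖ = 1) (hd : ‖d‖ = 1)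
    (ht0 : 0 ≤ t) (ht1 : t ≤ 1 / 5)
    (hab : |⟪a, b⟫| ≤ t) (hbc : |⟪b, c⟫| ≤ t) (hca : |⟪c, a⟫| ≤ t)
    (hbd : |⟪b, d⟫| ≤ t) (hcd : |⟪c, d⟫| ≤ t) :
    1 - 5 * t ^ 2 ≤ |⟪a, d⟫| :=
  stmt_0_general a b c d t ha hb hc hd ht1 hab hbc hca hbd hcd
end

section
/- Let G = (V, E) be a finite simple graph with m = |E| ≥ 1 edges that admits a proper 3-coloring (no edge is monochromatic). Then there exists a real symmetric positive semidefinite matrix K, indexed by the disjoint union V ⊔ E, such that: (i) all eigenvalues of K lie in [0,1]; (ii) K has rank at most 3; (iii) K_{uu} = deg_G(u)/m for every vertex u ∈ V and K_{ee} = 1/m for every edge e ∈ E; and (iv) for every edge e ∈ E with endpoints u and v, the entries K_{uv}, K_{ue} and K_{ve} are all zero, so that the determinant of the 3×3 principal submatrix of K indexed by {u, v, e} equals deg_G(u)·deg_G(v)/m³. -/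
/-!
Colour each vertex by a proper 3-colouring and each edge `uv` by the third colour, the one missing
from `u` and `v`. Give vertex `u` the weight `deg u / m` and each edge the weight `1 / m`, and let
`K = Aᴴ A`, where column `i` of the `3 × (V ⊕ E)` matrix `A` is `√(w i)` times the basis vector of
the colour of `i`. Every edge carries each colour exactly once among its two endpoints and itself,
so by double counting each colour class has total weight `1`. Hence the rows of `A` are orthonormal
and `K` is an orthogonal projection of rank at most 3. Moreover `K i j = 0` unless `i` and `j` share
a colour; since `u`, `v` and `uv` have three different colours, the principal
submatrix on `{u, v, uv}` is diagonal.
-/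

open Finset Matrix

section ColorGram

variable {ι C : Type*} [DecidableEq C]

noncomputable def colorFactor (κ : ι → C) (w : ι → ℝ) : Matrix C ι ℝ :=
  Matrix.of fun c i => if κ i = c then √(w i) else 0

lemma colorFactor_mul_conjTranspose [Fintype ι] (κ : ι → C) (w : ι → ℝ) (hw : 0 ≤ w) :
    colorFactor κ w * (colorFactor κ w)ᴴ = diagonal fun c => ∑ i with κ i = c, w i := by
  ext c c'
  rw [mul_apply, diagonal_apply, sum_filter]
  split_ifs with h
  · subst h
    refine sum_congr rfl fun i _ => ?_
    by_cases hi : κ i = c <;> simp [colorFactor, hi, Real.mul_self_sqrt (hw i)]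
  · refine sum_eq_zero fun i _ => ?_
    by_cases hi : κ i = c
    · simp [colorFactor, hi, h]
    · simp [colorFactor, hi]

variable [Fintype C]

noncomputable def colorGram (κ : ι → C) (w : ι → ℝ) : Matrix ι ι ℝ :=
  (colorFactor κ w)ᴴ * colorFactor κ w

variable (κ : ι → C) (w : ι → ℝ)

lemma colorGram_apply (i j : ι) :
    colorGram κ w i j = if κ i = κ j then √(w i) * √(w j) else 0 := by
  simp [colorGram, colorFactor, mul_apply, ite_mul, mul_ite, eq_comm]

lemma colorGram_apply_self {i : ι} (hw : 0 ≤ w i) : colorGram κ w i i = w i := by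
  rw [colorGram_apply, if_pos rfl, Real.mul_self_sqrt hw]

lemma colorGram_apply_of_ne {i j : ι} (h : κ i ≠ κ j) : colorGram κ w i j = 0 := by
  rw [colorGram_apply, if_neg h]

lemma posSemidef_colorGram [Fintype ι] : (colorGram κ w).PosSemidef :=
  posSemidef_conjTranspose_mul_self _

lemma rank_colorGram_le [Fintype ι] : (colorGram κ w).rank ≤ Fintype.card C := by
  rw [colorGram, rank_conjTranspose_mul_self]
  exact rank_le_card_height _

/-- The rows of `colorFactor κ w` are then orthonormal, so `colorGram κ w` is the orthogonal
projection onto their span. -/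
lemma isIdempotentElem_colorGram [Fintype ι] (hw : 0 ≤ w)
    (hclass : ∀ c, ∑ i with κ i = c, w i = 1) :
    IsIdempotentElem (colorGram κ w) := by
  have hrows : colorFactor κ w * (colorFactor κ w)ᴴ = 1 := by
    rw [colorFactor_mul_conjTranspose κ w hw, ← diagonal_one]
    exact congrArg diagonal (funext hclass)
  rw [IsIdempotentElem, colorGram, Matrix.mul_assoc, ← Matrix.mul_assoc (colorFactor κ w), hrows,
    Matrix.one_mul]

lemma colorGram_submatrix_eq_diagonal {n : Type*} [DecidableEq n] (f : n → ι)
    (hf : Function.Injective (κ ∘ f)) (hw : ∀ k, 0 ≤ w (f k)) :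
    (colorGram κ w).submatrix f f = diagonal (w ∘ f) := by
  ext a b
  rw [submatrix_apply, diagonal_apply]
  split_ifs with h
  · subst h
    exact colorGram_apply_self κ w (hw a)
  · exact colorGram_apply_of_ne κ w (hf.ne h)

end ColorGram

lemma Matrix.IsHermitian.eigenvalues_mem_Icc_of_isIdempotentElem {n 𝕜 : Type*} [Fintype n]
    [DecidableEq n] [RCLike 𝕜] {K : Matrix n n 𝕜} (hK : K.IsHermitian) (hP : IsIdempotentElem K)
    (i : n) : hK.eigenvalues i ∈ Set.Icc (0 : ℝ) 1 := by
  rcases hP.spectrum_subset ℝ (hK.eigenvalues_mem_spectrum_real i) with h | h <;>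
    simp [Set.mem_singleton_iff.mp h]

lemma Sym2.card_filter_mem_mk {α : Type*} [DecidableEq α] {a b : α} (hab : a ≠ b)
    (s : Finset α) :
    #{u ∈ s | u ∈ s(a, b)} = (if a ∈ s then 1 else 0) + (if b ∈ s then 1 else 0) := by
  have : {u ∈ s | u ∈ s(a, b)} = ({a, b} : Finset α).filter (· ∈ s) := by
    ext u
    simp only [mem_filter, Sym2.mem_iff, mem_insert, mem_singleton]
    tauto
  rw [this, filter_insert, filter_singleton]
  split_ifs with ha hb hb <;> simp [hab]

lemma Fin.injective_vecCons_neg_add {x y : Fin 3} (hxy : x ≠ y) :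
    Function.Injective ![x, y, -(x + y)] := by
  revert x y; decide

lemma Fin.ite_add_ite_add_ite_neg_add {x y : Fin 3} (hxy : x ≠ y) (c : Fin 3) :
    ((if x = c then 1 else 0) + (if y = c then 1 else 0) + if -(x + y) = c then 1 else 0) = 1 :=
    by
  revert x y c; decide

namespace SimpleGraph

variable {V : Type*}

/-- For a proper colouring, `-(col a + col b)` is the colour missing from the edge `ab`, since
`0 + 1 + 2 = 0` in `Fin 3`. -/
def thirdColor (col : V → Fin 3) : Sym2 V → Fin 3 :=
  Sym2.lift ⟨fun a b => -(col a + col b), fun _ _ => congrArg Neg.neg (add_comm _ _)⟩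

@[simp]
lemma thirdColor_mk (col : V → Fin 3) (a b : V) : thirdColor col s(a, b) = -(col a + col b) :=
  rfl

def incidenceColoring (G : SimpleGraph V) (col : V → Fin 3) : V ⊕ G.edgeSet → Fin 3 :=
  Sum.elim col fun e => thirdColor col e

@[simp] lemma incidenceColoring_inl (G : SimpleGraph V) (col : V → Fin 3) (u : V) :
    G.incidenceColoring col (.inl u) = col u := rfl

@[simp] lemma incidenceColoring_inr (G : SimpleGraph V) (col : V → Fin 3) (e : G.edgeSet) :
    G.incidenceColoring col (.inr e) = thirdColor col e := rfl

variable [Fintype V] (G : SimpleGraph V) [DecidableRel G.Adj]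

noncomputable def incidenceWeight : V ⊕ G.edgeSet → ℝ :=
  Sum.elim (fun u => G.degree u / #G.edgeFinset) fun _ => 1 / #G.edgeFinset

@[simp] lemma incidenceWeight_inl (u : V) :
    G.incidenceWeight (.inl u) = G.degree u / #G.edgeFinset := rfl

@[simp] lemma incidenceWeight_inr (e : G.edgeSet) :
    G.incidenceWeight (.inr e) = 1 / #G.edgeFinset := rfl

lemma incidenceWeight_nonneg : 0 ≤ G.incidenceWeight := by
  rintro (u | e) <;> simp only [incidenceWeight_inl, incidenceWeight_inr, Pi.zero_apply] <;>
    positivity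

variable [DecidableEq V]

lemma sum_degree_eq_sum_card_filter_mem (s : Finset V) :
    ∑ u ∈ s, G.degree u = ∑ e ∈ G.edgeFinset, #{u ∈ s | u ∈ e} := by
  simp_rw [← card_incidenceFinset_eq_degree, incidenceFinset_eq_filter]
  exact sum_card_bipartiteAbove_eq_sum_card_bipartiteBelow _

variable {G} {col : V → Fin 3}

lemma sum_degree_add_card_thirdColor (hcol : ∀ u v, G.Adj u v → col u ≠ col v) (c : Fin 3) :
    ∑ u with col u = c, G.degree u + #{e ∈ G.edgeFinset | thirdColor col e = c} =
      #G.edgeFinset := by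
  rw [sum_degree_eq_sum_card_filter_mem, card_filter, ← sum_add_distrib, card_eq_sum_ones]
  refine sum_congr rfl fun e he => ?_
  induction e using Sym2.ind with
  | _ a b =>
    have hab : G.Adj a b := mem_edgeFinset.mp he
    rw [Sym2.card_filter_mem_mk hab.ne]
    convert Fin.ite_add_ite_add_ite_neg_add (hcol a b hab) c using 3 <;> simp

lemma sum_incidenceWeight_filter_incidenceColoring
    (hcol : ∀ u v, G.Adj u v → col u ≠ col v) (hE : 0 < #G.edgeFinset) (c : Fin 3) :
    ∑ i with G.incidenceColoring col i = c, G.incidenceWeight i = 1 := by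
  have hcount : ((∑ u with col u = c, G.degree u +
      #{e ∈ G.edgeFinset | thirdColor col e = c} : ℕ) : ℝ) / #G.edgeFinset = 1 := by
    rw [sum_degree_add_card_thirdColor hcol c]
    exact div_self (by positivity)
  rw [← hcount, sum_filter, Fintype.sum_sum_type]
  push_cast
  rw [add_div, sum_div, sum_filter]
  simp only [incidenceColoring_inl, incidenceWeight_inl, incidenceColoring_inr,
    incidenceWeight_inr, one_div]
  congr 1
  rw [sum_set_coe (f := fun e => if thirdColor col e = c then _ else _), ← sum_filter, sum_const,
    nsmul_eq_mul, div_eq_mul_inv]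
  rfl

end SimpleGraph

theorem stmt_9 {V : Type*} [Fintype V] [DecidableEq V]
    (G : SimpleGraph V) [DecidableRel G.Adj]
    (m : ℕ) (hm : m = G.edgeFinset.card) (hm1 : 1 ≤ m)
    (hcol : ∃ col : V → Fin 3, ∀ u v : V, G.Adj u v → col u ≠ col v) :
    ∃ K : Matrix (V ⊕ G.edgeSet) (V ⊕ G.edgeSet) ℝ, ∃ hK : K.IsHermitian,
      (∀ i, hK.eigenvalues i ∈ Set.Icc (0 : ℝ) 1) ∧
      K.rank ≤ 3 ∧
      (∀ u : V, K (Sum.inl u) (Sum.inl u) = (G.degree u : ℝ) / m) ∧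
      (∀ e : G.edgeSet, K (Sum.inr e) (Sum.inr e) = 1 / m) ∧
      (∀ u v : V, ∀ h : G.Adj u v,
        K (Sum.inl u) (Sum.inl v) = 0 ∧
        K (Sum.inl u) (Sum.inr ⟨s(u, v), (SimpleGraph.mem_edgeSet G).mpr h⟩) = 0 ∧
        K (Sum.inl v) (Sum.inr ⟨s(u, v), (SimpleGraph.mem_edgeSet G).mpr h⟩) = 0 ∧
        (K.submatrix
            ![Sum.inl u, Sum.inl v, Sum.inr ⟨s(u, v), (SimpleGraph.mem_edgeSet G).mpr h⟩]
            ![Sum.inl u, Sum.inl v, Sum.inr ⟨s(u, v), (SimpleGraph.mem_edgeSet G).mpr h⟩]).det =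
          (G.degree u : ℝ) * (G.degree v : ℝ) / (m : ℝ) ^ 3) := by
  obtain ⟨col, hcol⟩ := hcol
  subst hm
  set κ := G.incidenceColoring col
  set w := G.incidenceWeight
  have hw : 0 ≤ w := G.incidenceWeight_nonneg
  have hK := posSemidef_colorGram κ w
  have hP := isIdempotentElem_colorGram κ w hw
    (SimpleGraph.sum_incidenceWeight_filter_incidenceColoring hcol hm1)
  refine ⟨colorGram κ w, hK.isHermitian,
    hK.isHermitian.eigenvalues_mem_Icc_of_isIdempotentElem hP,
    (rank_colorGram_le κ w).trans (by simp), fun u => colorGram_apply_self κ w (hw _),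
    fun e => colorGram_apply_self κ w (hw _), fun u v h => ?_⟩
  set e : G.edgeSet := ⟨s(u, v), (SimpleGraph.mem_edgeSet G).mpr h⟩
  have hinj : Function.Injective (κ ∘ ![.inl u, .inl v, .inr e]) := by
    convert Fin.injective_vecCons_neg_add (hcol u v h) using 1
    ext i
    fin_cases i <;> rfl
  refine ⟨colorGram_apply_of_ne κ w (hinj.ne (by decide : (0 : Fin 3) ≠ 1)),
    colorGram_apply_of_ne κ w (hinj.ne (by decide : (0 : Fin 3) ≠ 2)),
    colorGram_apply_of_ne κ w (hinj.ne (by decide : (1 : Fin 3) ≠ 2)), ?_⟩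
  rw [colorGram_submatrix_eq_diagonal κ w _ hinj fun _ => hw _, det_diagonal, Fin.prod_univ_three]
  simp only [Function.comp_apply, cons_val_zero, cons_val_one, Matrix.cons_val, w,
    SimpleGraph.incidenceWeight_inl, SimpleGraph.incidenceWeight_inr]
  ring
end

section
/- Let N and m be positive integers and let X₁, …, X_m ⊆ {1,…,N} be given subsets. For a real symmetric positive semidefinite N×N matrix K with all eigenvalues in [0,1] define L(K) = ∏_{j=1}^{m} |det(K − I_{X̄ⱼ})|, where for X ⊆ {1,…,N}, I_{X̄} denotes the diagonal 0/1 matrix with ones exactly on the diagonal entries indexed by the complement of X. If K maximizes L over all real symmetric positive semidefinite N×N matrices with all eigenvalues in [0,1], then for every j ∈ {1,…,m} one has |det(K − I_{X̄ⱼ})| ≥ 2^{−mN}. -/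
/-!
In the Loewner order both `K` and each `I_{X̄ⱼ}` lie between `0` and `1`, so `K - I_{X̄ⱼ}` lies
between `-1` and `1`; its eigenvalues are then in `[-1, 1]` and every factor of the likelihood is
at most `1`. The kernel `½ I` has likelihood `2^{-mN}`, so at a maximiser the product of the
factors is at least `2^{-mN}`, and dropping all factors but one can only increase it.
-/

open Matrix MatrixOrder ComplexOrder

namespace Matrix

variable {𝕜 n : Type*} [RCLike 𝕜] [DecidableEq n]

lemma diagonal_le_diagonal_iff {d e : n → 𝕜} : diagonal d ≤ diagonal e ↔ d ≤ e := by
  simp only [le_iff, diagonal_sub, posSemidef_diagonal_iff, Pi.le_def, sub_nonneg]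

lemma diagonal_mem_Icc_zero_one {d : n → 𝕜} (hd : ∀ i, d i ∈ Set.Icc 0 1) :
    diagonal d ∈ Set.Icc 0 1 := by
  rw [← diagonal_zero, ← diagonal_one, Set.mem_Icc, diagonal_le_diagonal_iff,
    diagonal_le_diagonal_iff]
  exact ⟨fun i ↦ (hd i).1, fun i ↦ (hd i).2⟩

variable [Fintype n]

lemma IsHermitian.eigenvalues_le_one_iff {A : Matrix n n 𝕜} (hA : A.IsHermitian) :
    (∀ i, hA.eigenvalues i ≤ 1) ↔ A ≤ 1 := by
  rw [← map_one (algebraMap ℝ (Matrix n n 𝕜)), le_algebraMap_iff_spectrum_le hA,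
    hA.spectrum_real_eq_range_eigenvalues, Set.forall_mem_range]

lemma exists_posSemidef_eigenvalues_le_one_iff {K : Matrix n n 𝕜} :
    (∃ h : K.PosSemidef, ∀ i, h.isHermitian.eigenvalues i ≤ 1) ↔ K ∈ Set.Icc 0 1 := by
  refine ⟨fun ⟨h, h₁⟩ ↦ ⟨nonneg_iff_posSemidef.2 h, h.isHermitian.eigenvalues_le_one_iff.1 h₁⟩,
    fun ⟨h₀, h₁⟩ ↦ ?_⟩
  have h := nonneg_iff_posSemidef.1 h₀
  exact ⟨h, h.isHermitian.eigenvalues_le_one_iff.2 h₁⟩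

lemma IsHermitian.norm_det_le_one {A : Matrix n n 𝕜} (hA : A.IsHermitian) (h₀ : -1 ≤ A)
    (h₁ : A ≤ 1) : ‖A.det‖ ≤ 1 := by
  rw [← map_one (algebraMap ℝ (Matrix n n 𝕜))] at h₁
  rw [← map_one (algebraMap ℝ (Matrix n n 𝕜)), ← map_neg] at h₀
  have hspec : ∀ i, |hA.eigenvalues i| ≤ 1 := fun i ↦
    have hi := hA.eigenvalues_mem_spectrum_real i
    abs_le.2 ⟨(algebraMap_le_iff_le_spectrum hA).1 h₀ _ hi,
      (le_algebraMap_iff_spectrum_le hA).1 h₁ _ hi⟩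
  rw [hA.det_eq_prod_eigenvalues, norm_prod]
  exact Finset.prod_le_one (fun _ _ ↦ norm_nonneg _) fun i _ ↦ by simpa using hspec i

lemma norm_det_sub_le_one {K D : Matrix n n 𝕜} (hK : K ∈ Set.Icc 0 1) (hD : D ∈ Set.Icc 0 1) :
    ‖(K - D).det‖ ≤ 1 := by
  have hKH : K.IsHermitian := (nonneg_iff_posSemidef.1 hK.1).isHermitian
  have hDH : D.IsHermitian := (nonneg_iff_posSemidef.1 hD.1).isHermitian
  refine (hKH.sub hDH).norm_det_le_one ?_ ?_
  · calc -1 ≤ -D := neg_le_neg hD.2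
      _ ≤ K - D := by simpa using sub_le_sub_right hK.1 D
  · calc K - D ≤ K := sub_le_self K hD.1
      _ ≤ 1 := hK.2

lemma abs_det_diagonal_half_sub_diagonal_ite (S : Finset n) :
    |(diagonal (fun _ ↦ (2⁻¹ : ℝ)) - diagonal fun i ↦ if i ∈ S then 0 else 1).det| =
      2⁻¹ ^ Fintype.card n := by
  rw [diagonal_sub, det_diagonal, Finset.abs_prod, ← Finset.card_univ, ← Finset.prod_const]
  refine Finset.prod_congr rfl fun i _ ↦ ?_
  split_ifs <;> norm_num

end Matrix

theorem stmt_13_general (N m : ℕ) (X : Fin m → Finset (Fin N))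
    (K : Matrix (Fin N) (Fin N) ℝ)
    (hK : ∃ h : K.PosSemidef, ∀ i, h.isHermitian.eigenvalues i ≤ 1)
    (hmax : ∀ K' : Matrix (Fin N) (Fin N) ℝ,
      (∃ h' : K'.PosSemidef, ∀ i, h'.isHermitian.eigenvalues i ≤ 1) →
      ∏ j, |(K' - Matrix.diagonal fun i => if i ∈ X j then (0 : ℝ) else 1).det| ≤
        ∏ j, |(K - Matrix.diagonal fun i => if i ∈ X j then (0 : ℝ) else 1).det|) :
    ∀ j : Fin m,
      (2 : ℝ) ^ (-(m * N : ℤ)) ≤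
        |(K - Matrix.diagonal fun i => if i ∈ X j then (0 : ℝ) else 1).det| := by
  set D : Fin m → Matrix (Fin N) (Fin N) ℝ := fun j ↦ diagonal fun i ↦ if i ∈ X j then 0 else 1
  have hD : ∀ j, D j ∈ Set.Icc 0 1 := fun j ↦
    diagonal_mem_Icc_zero_one fun i ↦ by split_ifs <;> norm_num
  have hfactor_le_one : ∀ j, |(K - D j).det| ≤ 1 := fun j ↦
    norm_det_sub_le_one (exists_posSemidef_eigenvalues_le_one_iff.1 hK) (hD j)
  have hhalf : diagonal (fun _ : Fin N ↦ (2⁻¹ : ℝ)) ∈ Set.Icc 0 1 :=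
    diagonal_mem_Icc_zero_one fun _ ↦ by norm_num
  have hlower : (2 : ℝ) ^ (-(m * N : ℤ)) ≤ ∏ j, |(K - D j).det| := by
    refine le_of_eq_of_le ?_ (hmax _ (exists_posSemidef_eigenvalues_le_one_iff.2 hhalf))
    rw [Finset.prod_congr rfl fun j _ ↦ abs_det_diagonal_half_sub_diagonal_ite (X j),
      Finset.prod_const, Finset.card_univ, Fintype.card_fin, Fintype.card_fin, ← pow_mul, inv_pow,
      ← zpow_natCast, ← _root_.zpow_neg]
    push_cast
    ring_nf
  intro j
  calc (2 : ℝ) ^ (-(m * N : ℤ)) ≤ ∏ k, |(K - D k).det| := hlower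
    _ ≤ ∏ k ∈ {j}, |(K - D k).det| :=
      Finset.prod_le_prod_of_subset_of_le_one (Finset.subset_univ _) (fun _ _ ↦ abs_nonneg _)
        fun k _ _ ↦ hfactor_le_one k
    _ = |(K - D j).det| := Finset.prod_singleton _ _

theorem stmt_13 (N m : ℕ) (hN : 0 < N) (hm : 0 < m) (X : Fin m → Finset (Fin N))
    (K : Matrix (Fin N) (Fin N) ℝ)
    (hK : ∃ h : K.PosSemidef, ∀ i, h.isHermitian.eigenvalues i ≤ 1)
    (hmax : ∀ K' : Matrix (Fin N) (Fin N) ℝ,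
      (∃ h' : K'.PosSemidef, ∀ i, h'.isHermitian.eigenvalues i ≤ 1) →
      ∏ j, |(K' - Matrix.diagonal fun i => if i ∈ X j then (0 : ℝ) else 1).det| ≤
        ∏ j, |(K - Matrix.diagonal fun i => if i ∈ X j then (0 : ℝ) else 1).det|) :
    ∀ j : Fin m,
      (2 : ℝ) ^ (-(m * N : ℤ)) ≤
        |(K - Matrix.diagonal fun i => if i ∈ X j then (0 : ℝ) else 1).det| :=
  stmt_13_general N m X K hK hmax
end

section
/- Let N be a positive integer and let p₁, …, p_N and p_max be real numbers with 0 < pᵢ ≤ p_max < 1 for every i. Then ∑_{i=1}^{N} (1 − pᵢ)·log(1/(1 − pᵢ)) ≤ (1 / log(1/p_max)) · ∑_{i=1}^{N} pᵢ·log(1/pᵢ). -/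
/-! Termwise: `log x ≥ 1 - 1/x` gives `q log (1/q) ≤ 1 - q`, so with `q = 1 - pᵢ` the left summand
is at most `pᵢ`; and `log (1/pᵢ) ≥ log (1/p_max) > 0` gives `pᵢ ≤ pᵢ log (1/pᵢ) / log (1/p_max)`. -/

open Real

lemma mul_log_one_div_le_one_sub {q : ℝ} (hq : 0 < q) : q * log (1 / q) ≤ 1 - q := by
  have h := one_sub_inv_le_log_of_pos hq
  rw [one_div, log_inv]
  calc q * -log q ≤ q * -(1 - q⁻¹) := by gcongr
    _ = 1 - q := by field_simp; ring

lemma le_mul_log_one_div_div_log {p pmax : ℝ} (hp : 0 < p) (hle : p ≤ pmax) (hlt : pmax < 1) :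
    p ≤ 1 / log (1 / pmax) * (p * log (1 / p)) := by
  have hL : 0 < log (1 / pmax) := log_pos (by rw [lt_div_iff₀ (hp.trans_le hle)]; linarith)
  have hmono : log (1 / pmax) ≤ log (1 / p) :=
    log_le_log (one_div_pos.2 (hp.trans_le hle)) (one_div_le_one_div_of_le hp hle)
  rw [one_div_mul_eq_div, le_div_iff₀ hL]
  exact mul_le_mul_of_nonneg_left hmono hp.le

theorem stmt_14_general (N : ℕ) (p : Fin N → ℝ) (pmax : ℝ)
    (hp0 : ∀ i, 0 < p i) (hpmax : ∀ i, p i ≤ pmax) (hpm1 : pmax < 1) :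
    ∑ i, (1 - p i) * Real.log (1 / (1 - p i)) ≤
      (1 / Real.log (1 / pmax)) * ∑ i, p i * Real.log (1 / p i) := by
  rw [Finset.mul_sum]
  refine Finset.sum_le_sum fun i _ => ?_
  calc (1 - p i) * log (1 / (1 - p i)) ≤ 1 - (1 - p i) :=
        mul_log_one_div_le_one_sub (by linarith [hpmax i])
    _ = p i := by ring
    _ ≤ 1 / log (1 / pmax) * (p i * log (1 / p i)) :=
        le_mul_log_one_div_div_log (hp0 i) (hpmax i) hpm1

theorem stmt_14 (N : ℕ) (hN : 0 < N) (p : Fin N → ℝ) (pmax : ℝ)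
    (hp0 : ∀ i, 0 < p i) (hpmax : ∀ i, p i ≤ pmax) (hpm1 : pmax < 1) :
    ∑ i, (1 - p i) * Real.log (1 / (1 - p i)) ≤
      (1 / Real.log (1 / pmax)) * ∑ i, p i * Real.log (1 / p i) :=
  stmt_14_general N p pmax hp0 hpmax hpm1
end

section
/- The function f defined on the open interval (0,1) by f(x) = ((1 − x)·log(1 − x)) / (x·log x) is positive and monotonically increasing: for all x, y with 0 < x ≤ y < 1 one has 0 < f(x) ≤ f(y). -/
/-!
Write `f = N / D` with `D x = x log x` and `N x = D (1 - x)`. By the quotient rule the numerator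
of `f'` simplifies to `H(x) - log x · log (1 - x)`, where `H` is the binary entropy. With
`a = -log x > 0` and `b = -log (1 - x) > 0`, the bound `t log t ≥ t - 1` at `t = x` and
`t = 1 - x` gives `a x ≤ 1 - x` and `b (1 - x) ≤ x`; multiplying by `b` and `a` and adding
yields `ab ≤ a x + b (1 - x) = H(x)`, so `f' ≥ 0` on `(0, 1)`.
-/

open Real Set

namespace Real

lemma log_mul_log_one_sub_le_binEntropy {p : ℝ} (hp₀ : 0 < p) (hp₁ : p < 1) :
    log p * log (1 - p) ≤ binEntropy p := by
  have hlog : log p < 0 := log_neg hp₀ hp₁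
  have hlog' : log (1 - p) < 0 := log_neg (by linarith) (by linarith)
  have h := self_sub_one_le_mul_log hp₀.le
  have h' := self_sub_one_le_mul_log (sub_nonneg.2 hp₁.le)
  rw [binEntropy, log_inv, log_inv]
  nlinarith [mul_le_mul_of_nonpos_left h hlog'.le, mul_le_mul_of_nonpos_left h' hlog.le]

lemma hasDerivAt_one_sub_mul_log_one_sub {x : ℝ} (hx : x ≠ 1) :
    HasDerivAt (fun x ↦ (1 - x) * log (1 - x)) (-(log (1 - x) + 1)) x :=
  (hasDerivAt_mul_log (sub_ne_zero.2 hx.symm)).comp_const_sub 1 x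

end Real

noncomputable def mulLogRatio (x : ℝ) : ℝ := (1 - x) * log (1 - x) / (x * log x)

lemma mulLogRatio_pos {x : ℝ} (hx₀ : 0 < x) (hx₁ : x < 1) : 0 < mulLogRatio x :=
  div_pos_of_neg_of_neg (mul_log_neg (by linarith) (by linarith)) (mul_log_neg hx₀ hx₁)

lemma hasDerivAt_mulLogRatio {x : ℝ} (hx : x * log x ≠ 0) :
    HasDerivAt mulLogRatio ((binEntropy x - log x * log (1 - x)) / (x * log x) ^ 2) x := by
  have hx₀ : x ≠ 0 := left_ne_zero_of_mul hx
  have hx₁ : x ≠ 1 := by rintro rfl; simp at hx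
  have hquot := (hasDerivAt_one_sub_mul_log_one_sub hx₁).div (hasDerivAt_mul_log hx₀) hx
  refine hquot.congr_deriv ?_
  simp only [binEntropy, log_inv]
  ring

lemma monotoneOn_mulLogRatio : MonotoneOn mulLogRatio (Ioo 0 1) := by
  have hderiv : ∀ x ∈ Ioo (0 : ℝ) 1,
      HasDerivAt mulLogRatio ((binEntropy x - log x * log (1 - x)) / (x * log x) ^ 2) x :=
    fun x hx ↦ hasDerivAt_mulLogRatio (mul_log_neg hx.1 hx.2).ne
  refine monotoneOn_of_hasDerivWithinAt_nonneg (convex_Ioo 0 1)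
    (fun x hx ↦ (hderiv x hx).continuousAt.continuousWithinAt)
    (fun x hx ↦ (hderiv x (interior_subset hx)).hasDerivWithinAt) fun x hx ↦ ?_
  rw [interior_Ioo] at hx
  exact div_nonneg (sub_nonneg.2 (log_mul_log_one_sub_le_binEntropy hx.1 hx.2)) (sq_nonneg _)

theorem stmt_15 (x y : ℝ) (hx : 0 < x) (hxy : x ≤ y) (hy : y < 1) :
    0 < ((1 - x) * Real.log (1 - x)) / (x * Real.log x) ∧
      ((1 - x) * Real.log (1 - x)) / (x * Real.log x) ≤
        ((1 - y) * Real.log (1 - y)) / (y * Real.log y) :=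
  ⟨mulLogRatio_pos hx (hxy.trans_lt hy),
    monotoneOn_mulLogRatio ⟨hx, hxy.trans_lt hy⟩ ⟨hx.trans_le hxy, hy⟩ hxy⟩
end

section
/- Let m ≥ 2 and N ≥ 1 be integers, and let a₁, …, a_N be integers with 1 ≤ aᵢ ≤ m − 1 for all i. Let a_max = max_i aᵢ. Then −∑_{i=1}^{N} [ aᵢ·log(aᵢ/m) + (m − aᵢ)·log(1 − aᵢ/m) ] ≤ (1 + 1/log(m/a_max)) · ( −∑_{i=1}^{N} aᵢ·log(aᵢ/m) ). -/
/-! The bound holds term by term. The "failure" part of each term is at most `aᵢ`, since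
`-(1 - x) log (1 - x) ≤ x` (from `log y ≥ 1 - 1/y`), while the "success" part
`aᵢ log (m / aᵢ)` is at least `aᵢ log (m / a_max)`. -/

open Real

namespace BernoulliLogLikelihood

variable {b c m : ℝ}

theorem neg_mul_log_one_sub_div_le (hb : 0 ≤ b) (hbm : b < m) :
    -((m - b) * log (1 - b / m)) ≤ b := by
  have hm : 0 < m := hb.trans_lt hbm
  have hpos : 0 < 1 - b / m := by rw [sub_pos, div_lt_one hm]; exact hbm
  have hlog := one_sub_inv_le_log_of_pos hpos
  have hinv : (m - b) * (1 - (1 - b / m)⁻¹) = -b := by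
    have : m - b ≠ 0 := (sub_pos.2 hbm).ne'
    field_simp
    ring
  linarith [mul_le_mul_of_nonneg_left hlog (sub_nonneg.2 hbm.le)]

theorem mul_log_div_le_neg_mul_log_div (hb : 0 < b) (hbc : b ≤ c) (hm : 0 < m) :
    b * log (m / c) ≤ -(b * log (b / m)) := by
  rw [← mul_neg, ← log_inv, inv_div]
  gcongr
  exact div_pos hm (hb.trans_le hbc)

theorem neg_bernoulli_log_le (hb : 0 < b) (hbc : b ≤ c) (hcm : c < m) :
    -(b * log (b / m) + (m - b) * log (1 - b / m)) ≤
      (1 + 1 / log (m / c)) * -(b * log (b / m)) := by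
  have hc : 0 < c := hb.trans_le hbc
  have hL : 0 < log (m / c) := log_pos ((one_lt_div hc).2 hcm)
  have hfail := neg_mul_log_one_sub_div_le hb.le (hbc.trans_lt hcm)
  have hsucc : b ≤ -(b * log (b / m)) / log (m / c) :=
    (le_div_iff₀ hL).2 (mul_log_div_le_neg_mul_log_div hb hbc (hc.trans hcm))
  rw [add_mul, one_mul, one_div_mul_eq_div]
  linarith

end BernoulliLogLikelihood

open BernoulliLogLikelihood in
theorem stmt_18_general (m N : ℕ) (a : Fin N → ℕ)
    (ha : ∀ i, 1 ≤ a i ∧ a i ≤ m - 1) (amax : ℕ)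
    (hamax : IsGreatest (Set.range a) amax) :
    -∑ i, ((a i : ℝ) * Real.log ((a i : ℝ) / m) +
        ((m : ℝ) - (a i : ℝ)) * Real.log (1 - (a i : ℝ) / m)) ≤
      (1 + 1 / Real.log ((m : ℝ) / (amax : ℝ))) *
        (-∑ i, (a i : ℝ) * Real.log ((a i : ℝ) / m)) := by
  obtain ⟨i₀, rfl⟩ := hamax.1
  have hmax_lt : (a i₀ : ℝ) < m := by have := ha i₀; exact_mod_cast (by omega : a i₀ < m)
  calc _ = ∑ i, -((a i : ℝ) * log ((a i : ℝ) / m) +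
          ((m : ℝ) - (a i : ℝ)) * log (1 - (a i : ℝ) / m)) := (Finset.sum_neg_distrib _).symm
    _ ≤ ∑ i, (1 + 1 / log ((m : ℝ) / (a i₀ : ℝ))) * -((a i : ℝ) * log ((a i : ℝ) / m)) :=
        Finset.sum_le_sum fun i _ ↦ neg_bernoulli_log_le (by exact_mod_cast (ha i).1)
          (by exact_mod_cast hamax.2 ⟨i, rfl⟩) hmax_lt
    _ = _ := by rw [← Finset.mul_sum, Finset.sum_neg_distrib]

theorem stmt_18 (m N : ℕ) (hm : 2 ≤ m) (hN : 1 ≤ N) (a : Fin N → ℕ)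
    (ha : ∀ i, 1 ≤ a i ∧ a i ≤ m - 1) (amax : ℕ)
    (hamax : IsGreatest (Set.range a) amax) :
    -∑ i, ((a i : ℝ) * Real.log ((a i : ℝ) / m) +
        ((m : ℝ) - (a i : ℝ)) * Real.log (1 - (a i : ℝ) / m)) ≤
      (1 + 1 / Real.log ((m : ℝ) / (amax : ℝ))) *
        (-∑ i, (a i : ℝ) * Real.log ((a i : ℝ) / m)) :=
  stmt_18_general m N a ha amax hamax
end

section
/- Let m ≥ 2 and N ≥ 1 be integers, and let a₁, …, a_N be integers with 1 ≤ aᵢ ≤ m − 1 for all i. Then −∑_{i=1}^{N} [ aᵢ·log(aᵢ/m) + (m − aᵢ)·log(1 − aᵢ/m) ] ≤ (1 + (1 + 1/(m−1))·log m) · ( −∑_{i=1}^{N} aᵢ·log(aᵢ/m) ). -/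
/-!
With `b = m - a`, the summand by which the left side exceeds `-a log (a/m)` is `b log (m/b)`.
Concavity of `log` on `[1, m]` gives `log (m/b) ≤ a log m / (m - 1)`, while
`log (m/a) ≥ 1 - a/m = b/m`; multiplying out, `b log (m/b)` is at most
`(m/(m-1)) log m · a log (m/a)`, termwise.
-/

open Real

namespace Real

/-- The chord of `log` from `1` to `M` lies below its graph. -/
theorem sub_one_mul_log_le_sub_one_mul_log {b M : ℝ} (hb : 1 ≤ b) (hbM : b ≤ M) :
    (b - 1) * log M ≤ (M - 1) * log b := by
  rcases hb.eq_or_lt with rfl | hb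
  · simp
  rcases hbM.eq_or_lt with rfl | hbM
  · rw [mul_comm]
  have := strictConcaveOn_log_Ioi.concaveOn.neg.secant_mono_aux1
    (Set.mem_Ioi.2 one_pos) (Set.mem_Ioi.2 (by linarith)) hb hbM
  simp only [Pi.neg_apply, log_one, neg_zero, mul_zero, zero_add, mul_neg] at this
  linarith

theorem mul_log_div_self_le {b M : ℝ} (hb : 1 ≤ b) (hbM : b ≤ M) :
    b * log (M / b) ≤ b * (M - b) * log M / (M - 1) := by
  rcases hbM.eq_or_lt with rfl | hbM
  · simp
  have hM : 0 < M - 1 := by linarith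
  rw [log_div (by linarith) (by linarith), le_div_iff₀ hM]
  nlinarith [sub_one_mul_log_le_sub_one_mul_log hb hbM.le]

theorem div_le_log_div {s M : ℝ} (hs : 0 < s) (hM : 0 < M) : (M - s) / M ≤ log (M / s) := by
  have := one_sub_inv_le_log_of_pos (div_pos hM hs)
  rwa [inv_div, one_sub_div hM.ne'] at this

end Real

theorem neg_mul_log_add_neg_mul_log_le {s M : ℝ} (hs : 1 ≤ s) (hsM : s ≤ M - 1) :
    -(s * log (s / M) + (M - s) * log (1 - s / M)) ≤
      (1 + (1 + 1 / (M - 1)) * log M) * (-(s * log (s / M))) := by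
  have hM : 0 < M - 1 := by linarith
  have hb : 1 ≤ M - s := by linarith
  have hlog_flip : ∀ x : ℝ, log (x / M) = -log (M / x) := fun x => by
    rw [← log_inv, inv_div]
  have hcomp : 1 - s / M = (M - s) / M := by rw [sub_div, div_self (by linarith)]
  rw [hcomp, hlog_flip s, hlog_flip (M - s)]
  have key : (M - s) * log (M / (M - s)) ≤ (1 + 1 / (M - 1)) * log M * (s * log (M / s)) :=
    calc (M - s) * log (M / (M - s))
        ≤ (M - s) * (M - (M - s)) * log M / (M - 1) := mul_log_div_self_le hb (by linarith)
      _ = (1 + 1 / (M - 1)) * log M * (s * ((M - s) / M)) := by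
        field_simp [(by linarith : M ≠ 0)]; ring
      _ ≤ (1 + 1 / (M - 1)) * log M * (s * log (M / s)) := by
        have := log_nonneg (by linarith : 1 ≤ M)
        gcongr
        exact div_le_log_div (by linarith) (by linarith)
  linear_combination key

theorem stmt_19_general (m N : ℕ) (a : Fin N → ℕ)
    (ha : ∀ i, 1 ≤ a i ∧ a i ≤ m - 1) :
    -∑ i, ((a i : ℝ) * Real.log ((a i : ℝ) / m) +
        ((m : ℝ) - (a i : ℝ)) * Real.log (1 - (a i : ℝ) / m)) ≤
      (1 + (1 + 1 / ((m : ℝ) - 1)) * Real.log m) *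
        (-∑ i, (a i : ℝ) * Real.log ((a i : ℝ) / m)) := by
  rw [← Finset.sum_neg_distrib, ← Finset.sum_neg_distrib, Finset.mul_sum]
  refine Finset.sum_le_sum fun i _ => neg_mul_log_add_neg_mul_log_le ?_ ?_
  · exact_mod_cast (ha i).1
  · have : a i + 1 ≤ m := by have := ha i; omega
    have : (a i : ℝ) + 1 ≤ m := by exact_mod_cast this
    linarith

theorem stmt_19 (m N : ℕ) (hm : 2 ≤ m) (hN : 1 ≤ N) (a : Fin N → ℕ)
    (ha : ∀ i, 1 ≤ a i ∧ a i ≤ m - 1) :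
    -∑ i, ((a i : ℝ) * Real.log ((a i : ℝ) / m) +
        ((m : ℝ) - (a i : ℝ)) * Real.log (1 - (a i : ℝ) / m)) ≤
      (1 + (1 + 1 / ((m : ℝ) - 1)) * Real.log m) *
        (-∑ i, (a i : ℝ) * Real.log ((a i : ℝ) / m)) :=
  stmt_19_general m N a ha
end
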